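/- Negabent versus bent: Let n ≥ 1 be even and f : F_2^n → F_2. Define h : F_2^n → F_2 by h(x) = f(x) ⊕ s_2(x), where s_2(x) = C(wt(x),2) mod 2 is the elementary symmetric Boolean polynomial of degree 2. Then f is negabent (i.e., |N_f(u)| = 1 for all u ∈ F_2^n, where N_f(u) = 2^{-n/2} Σ_x (-1)^{f(x)} (-1)^{u·x} i^{wt(x)}) if and only if h is bent (i.e., |W_h(u)| = 1 for all u ∈ F_2^n, where W_h(u) = 2^{-n/2} Σ_x (-1)^{h(x)+u·x}). -/

import Mathlib

/-!
Writing `i ^ w = (-1) ^ C(w,2) * ((1 + i) / 2 + (1 - i) / 2 * (-1) ^ w)` and noting that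
`(-1) ^ wt(x) = (-1) ^ (1·x)` for the all-ones vector `1`, the nega-Hadamard transform of `f`
becomes a combination of Walsh transforms of `h = f + s₂`:
`N_f(u) = (1 + i) / 2 * W_h(u) + (1 - i) / 2 * W_h(u + 1)`.
Since `W_h` is real, `|N_f(u)|² = (W_h(u)² + W_h(u + 1)²) / 2`, so bent implies negabent.
Conversely, the unnormalised Walsh values are integers `A, B` with `A² + B² = 2 ^ (n + 1)`,
and for even `n` a descent on powers of two forces `A² = 2 ^ n`.
-/

open Complex Finset

noncomputable section

/-- `ζ_q = exp(2πi/q)`. -/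
def zetaC (q : ℕ) : ℂ := Complex.exp (2 * Real.pi * Complex.I / q)

/-- Hamming weight of a binary vector. -/
def wtv {n : ℕ} (x : Fin n → ZMod 2) : ℕ := ∑ j, (x j).val

/-- `(-1)^{u·x}` where `u·x` is the dot product over `F_2`. -/
def chr {n : ℕ} (u x : Fin n → ZMod 2) : ℂ := (-1 : ℂ) ^ (∑ j, u j * x j : ZMod 2).val

/-- `2^{-n/2}` as a complex number. -/
def nrm (n : ℕ) : ℂ := (((2 : ℝ) ^ (-(n : ℝ) / 2) : ℝ) : ℂ)

/-- The nega-Hadamard transform of a Boolean function,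
`N_f(u) = 2^{-n/2} Σ_x (-1)^{f(x)} (-1)^{u·x} i^{wt(x)}`. -/
def negaHB {n : ℕ} (f : (Fin n → ZMod 2) → ZMod 2) (u : Fin n → ZMod 2) : ℂ :=
  nrm n * ∑ x, (-1 : ℂ) ^ (f x).val * chr u x * Complex.I ^ wtv x

/-- The Walsh-Hadamard transform of a Boolean function,
`W_h(u) = 2^{-n/2} Σ_x (-1)^{h(x)+u·x}`. -/
def WHB {n : ℕ} (h : (Fin n → ZMod 2) → ZMod 2) (u : Fin n → ZMod 2) : ℂ :=
  nrm n * ∑ x, (-1 : ℂ) ^ ((h x).val + (∑ j, u j * x j : ZMod 2).val)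

lemma neg_one_pow_zmod_two_val_add {R : Type*} [Ring R] (a b : ZMod 2) :
    (-1 : R) ^ (a + b).val = (-1) ^ a.val * (-1) ^ b.val := by
  rw [ZMod.val_add, ← neg_one_pow_eq_pow_mod_two, pow_add]

lemma neg_one_pow_val_natCast {R : Type*} [Ring R] (m : ℕ) :
    (-1 : R) ^ (m : ZMod 2).val = (-1) ^ m := by
  rw [ZMod.val_natCast, ← neg_one_pow_eq_pow_mod_two]

lemma Complex.I_pow_eq_neg_one_pow_choose_two_mul (w : ℕ) :
    I ^ w = (-1) ^ w.choose 2 * ((1 + I) / 2 + (1 - I) / 2 * (-1) ^ w) := by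
  induction w using Nat.twoStepInduction with
  | zero => norm_num; ring
  | one => norm_num; ring
  | more w ih _ =>
    have hc : (w + 2).choose 2 = w.choose 2 + (2 * w + 1) := by
      have h₁ : (w + 2).choose 2 = (w + 1).choose 1 + (w + 1).choose 2 := Nat.choose_succ_succ' _ _
      have h₂ : (w + 1).choose 2 = w.choose 1 + w.choose 2 := Nat.choose_succ_succ' _ _
      rw [h₁, h₂, Nat.choose_one_right, Nat.choose_one_right]
      ring
    rw [hc, pow_add, ih, I_sq, pow_add (-1 : ℂ) (w.choose 2), pow_succ (-1 : ℂ) (2 * w), pow_mul,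
      pow_add (-1 : ℂ) w 2, neg_one_sq, one_pow]
    ring

lemma Int.even_and_even_of_four_dvd_sq_add_sq {p q : ℤ} (h : 4 ∣ p ^ 2 + q ^ 2) :
    Even p ∧ Even q := by
  rcases Int.even_or_odd' p with ⟨a, rfl | rfl⟩ <;>
    rcases Int.even_or_odd' q with ⟨b, rfl | rfl⟩
  · exact ⟨even_two_mul a, even_two_mul b⟩
  all_goals exfalso; ring_nf at h; omega

lemma Int.sq_eq_four_pow_of_sq_add_sq_eq (p q : ℤ) :
    ∀ k : ℕ, p ^ 2 + q ^ 2 = 2 * 4 ^ k → p ^ 2 = 4 ^ k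
  | 0, h => by
    have hp : -1 ≤ p ∧ p ≤ 1 := by constructor <;> nlinarith [sq_nonneg q]
    have hq : -1 ≤ q ∧ q ≤ 1 := by constructor <;> nlinarith [sq_nonneg p]
    obtain ⟨hp₀, hp₁⟩ := hp
    obtain ⟨hq₀, hq₁⟩ := hq
    interval_cases p <;> interval_cases q <;> simp_all
  | k + 1, h => by
    obtain ⟨⟨a, rfl⟩, ⟨b, rfl⟩⟩ := Int.even_and_even_of_four_dvd_sq_add_sq (p := p) (q := q)
      ⟨2 * 4 ^ k, by rw [h]; ring⟩
    have hab : a ^ 2 + b ^ 2 = 2 * 4 ^ k := by linarith [pow_succ (4 : ℤ) k]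
    linear_combination 4 * Int.sq_eq_four_pow_of_sq_add_sq_eq a b k hab

lemma natCast_wtv {n : ℕ} (x : Fin n → ZMod 2) : (wtv x : ZMod 2) = ∑ j, x j := by
  simp only [wtv, Nat.cast_sum, ZMod.natCast_zmod_val]

lemma sum_add_one_mul_eq_add_wtv {n : ℕ} (u x : Fin n → ZMod 2) :
    ∑ j, (u + 1) j * x j = ∑ j, u j * x j + (wtv x : ZMod 2) := by
  rw [natCast_wtv, ← sum_add_distrib]
  simp [add_mul]

lemma negaHB_eq_WHB_add_WHB {n : ℕ} {f h : (Fin n → ZMod 2) → ZMod 2}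
    (hh : ∀ x, h x = f x + (Nat.choose (wtv x) 2 : ZMod 2)) (u : Fin n → ZMod 2) :
    negaHB f u = (1 + I) / 2 * WHB h u + (1 - I) / 2 * WHB h (u + 1) := by
  rw [negaHB, WHB, WHB, mul_left_comm, mul_left_comm ((1 - I) / 2), ← mul_add]
  congr 1
  rw [mul_sum, mul_sum, ← sum_add_distrib]
  refine sum_congr rfl fun x _ => ?_
  rw [pow_add, pow_add, hh, sum_add_one_mul_eq_add_wtv, neg_one_pow_zmod_two_val_add,
    neg_one_pow_zmod_two_val_add, neg_one_pow_val_natCast, neg_one_pow_val_natCast,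
    I_pow_eq_neg_one_pow_choose_two_mul, chr]
  ring

def walshSum {n : ℕ} (h : (Fin n → ZMod 2) → ZMod 2) (u : Fin n → ZMod 2) : ℤ :=
  ∑ x, (-1) ^ ((h x).val + (∑ j, u j * x j : ZMod 2).val)

lemma WHB_eq_nrm_mul_walshSum {n : ℕ} (h : (Fin n → ZMod 2) → ZMod 2) (u : Fin n → ZMod 2) :
    WHB h u = nrm n * walshSum h u := by
  simp [WHB, walshSum]

lemma norm_nrm_mul_sq (n : ℕ) (z : ℂ) : ‖nrm n * z‖ ^ 2 = ‖z‖ ^ 2 / 2 ^ n := by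
  rw [norm_mul, mul_pow, nrm, norm_real, Real.norm_of_nonneg (by positivity),
    ← Real.rpow_natCast _ 2, ← Real.rpow_mul zero_le_two,
    Nat.cast_ofNat, div_mul_cancel₀ _ two_ne_zero, Real.rpow_neg zero_le_two, Real.rpow_natCast,
    inv_mul_eq_div]

lemma norm_sq_half_add_mul_I (a b : ℝ) :
    ‖(1 + I) / 2 * a + (1 - I) / 2 * b‖ ^ 2 = (a ^ 2 + b ^ 2) / 2 := by
  have hz : (1 + I) / 2 * a + (1 - I) / 2 * b = ((a + b) / 2 : ℝ) + ((a - b) / 2 : ℝ) * I := by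
    push_cast
    ring
  rw [hz, norm_add_mul_I, Real.sq_sqrt (by positivity)]
  ring

lemma norm_WHB_eq_one_iff {n : ℕ} (h : (Fin n → ZMod 2) → ZMod 2) (u : Fin n → ZMod 2) :
    ‖WHB h u‖ = 1 ↔ walshSum h u ^ 2 = 2 ^ n := by
  rw [← pow_eq_one_iff_of_nonneg (norm_nonneg _) two_ne_zero, WHB_eq_nrm_mul_walshSum,
    norm_nrm_mul_sq, div_eq_one_iff_eq (by positivity), ← ofReal_intCast, norm_real,
    Real.norm_eq_abs, sq_abs]
  exact_mod_cast Iff.rfl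

lemma norm_negaHB_eq_one_iff {n : ℕ} {f h : (Fin n → ZMod 2) → ZMod 2}
    (hh : ∀ x, h x = f x + (Nat.choose (wtv x) 2 : ZMod 2)) (u : Fin n → ZMod 2) :
    ‖negaHB f u‖ = 1 ↔ walshSum h u ^ 2 + walshSum h (u + 1) ^ 2 = 2 ^ (n + 1) := by
  have hN : negaHB f u = nrm n * ((1 + I) / 2 * (walshSum h u : ℝ)
      + (1 - I) / 2 * (walshSum h (u + 1) : ℝ)) := by
    rw [negaHB_eq_WHB_add_WHB hh, WHB_eq_nrm_mul_walshSum, WHB_eq_nrm_mul_walshSum]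
    push_cast
    ring
  rw [← pow_eq_one_iff_of_nonneg (norm_nonneg _) two_ne_zero, hN, norm_nrm_mul_sq,
    norm_sq_half_add_mul_I, div_div, div_eq_one_iff_eq (by positivity), ← pow_succ']
  exact_mod_cast Iff.rfl

theorem negabent_iff_bent_general {n : ℕ} (hne : Even n)
    (f h : (Fin n → ZMod 2) → ZMod 2)
    (hh : ∀ x, h x = f x + (Nat.choose (wtv x) 2 : ZMod 2)) :
    (∀ u : Fin n → ZMod 2, ‖negaHB f u‖ = 1) ↔
    (∀ u : Fin n → ZMod 2, ‖WHB h u‖ = 1) := by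
  simp only [norm_negaHB_eq_one_iff hh, norm_WHB_eq_one_iff]
  refine ⟨fun hnega u => ?_, fun hbent u => by rw [hbent, hbent, pow_succ, mul_two]⟩
  obtain ⟨k, rfl⟩ := hne
  have h4 : (2 : ℤ) ^ (k + k) = 4 ^ k := by rw [← two_mul, pow_mul]; norm_num
  rw [h4]
  exact Int.sq_eq_four_pow_of_sq_add_sq_eq _ _ k (by rw [hnega u, pow_succ, h4, mul_comm])

/-- for even `n`, `f` is negabent iff `h = f ⊕ s₂` is bent. -/
theorem negabent_iff_bent {n : ℕ} (hn : 1 ≤ n) (hne : Even n)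
    (f h : (Fin n → ZMod 2) → ZMod 2)
    (hh : ∀ x, h x = f x + (Nat.choose (wtv x) 2 : ZMod 2)) :
    (∀ u : Fin n → ZMod 2, ‖negaHB f u‖ = 1) ↔
    (∀ u : Fin n → ZMod 2, ‖WHB h u‖ = 1) :=
  negabent_iff_bent_general hne f h hh

end
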